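/- Let X and Y be Hausdorff topological spaces and f : X → Y a continuous surjective map with finite fibres (f⁻¹(y) is finite for every y ∈ Y). Then the Cantor-Bendixson rank of Y is at least the Cantor-Bendixson rank of X. -/

import Mathlib

/-! A continuous map with finite fibres sends accumulation points to accumulation points, so by
transfinite induction it maps the `o`-th derivative of `X` into the `o`-th derivative of `Y`. -/

open Filter

/-- The `o`-th Cantor–Bendixson derivative of the space `X`: at successors remove isolated
points (keep only accumulation points), at limits take intersections. -/
noncomputable def cbDeriv (X : Type*) [TopologicalSpace X] (o : Ordinal) : Set X :=
  Ordinal.limitRecOn o Set.univ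
    (fun _ s => {x | x ∈ s ∧ AccPt x (𝓟 s)})
    (fun o _ ih => ⋂ (o' : Ordinal) (h : o' < o), ih o' h)

section cbDeriv

open Topology

variable {X Y : Type*} [TopologicalSpace X] [TopologicalSpace Y]

theorem cbDeriv_zero : cbDeriv X 0 = Set.univ :=
  Ordinal.limitRecOn_zero ..

theorem cbDeriv_add_one (o : Ordinal) :
    cbDeriv X (o + 1) = {x | x ∈ cbDeriv X o ∧ AccPt x (𝓟 (cbDeriv X o))} :=
  Ordinal.limitRecOn_add_one ..

theorem cbDeriv_limit {o : Ordinal} (ho : Order.IsSuccLimit o) :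
    cbDeriv X o = ⋂ (o' : Ordinal) (_ : o' < o), cbDeriv X o' :=
  Ordinal.limitRecOn_limit _ _ _ _ ho

/-- Points of `S` near `x` are found off the finite closed set `f ⁻¹' {f x} \ {x}`, so their
images are distinct from `f x`. -/
theorem AccPt.image_of_finite_preimage [T1Space X] {f : X → Y} (hf : Continuous f) {x : X}
    (hx : (f ⁻¹' {f x}).Finite) {S : Set X} (h : AccPt x (𝓟 S)) :
    AccPt (f x) (𝓟 (f '' S)) := by
  rw [accPt_iff_nhds] at h ⊢
  intro V hV
  have hfiber : (f ⁻¹' {f x} \ {x})ᶜ ∈ 𝓝 x :=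
    (hx.subset Set.sdiff_subset).isClosed.isOpen_compl.mem_nhds (by simp)
  obtain ⟨y, ⟨⟨hyV, hy_fiber⟩, hyS⟩, hyx⟩ :=
    h _ (inter_mem (hf.continuousAt.preimage_mem_nhds hV) hfiber)
  exact ⟨f y, ⟨hyV, y, hyS, rfl⟩, fun hfy => hy_fiber ⟨hfy, hyx⟩⟩

theorem mapsTo_cbDeriv [T1Space X] {f : X → Y} (hf : Continuous f)
    (hfin : ∀ x, (f ⁻¹' {f x}).Finite) (o : Ordinal) :
    Set.MapsTo f (cbDeriv X o) (cbDeriv Y o) := by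
  induction o using Ordinal.limitRecOn with
  | zero => simp [cbDeriv_zero]
  | add_one o ih =>
    rw [cbDeriv_add_one, cbDeriv_add_one]
    rintro x ⟨hx, hacc⟩
    exact ⟨ih hx, (hacc.image_of_finite_preimage hf (hfin x)).mono
      (principal_mono.2 ih.image_subset)⟩
  | limit o ho ih =>
    rw [cbDeriv_limit ho, cbDeriv_limit ho]
    simp only [Set.MapsTo, Set.mem_iInter]
    exact fun x hx o' ho' => ih o' ho' (hx o' ho')

end cbDeriv

theorem stmt_7_general {X Y : Type*} [TopologicalSpace X] [TopologicalSpace Y]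
    [T2Space X] (f : X → Y) (hcont : Continuous f)
    (hfin : ∀ y : Y, (f ⁻¹' {y}).Finite) :
    ∀ o : Ordinal, (cbDeriv X o).Nonempty → (cbDeriv Y o).Nonempty :=
  fun o hX => hX.image f |>.mono (mapsTo_cbDeriv hcont (fun x => hfin (f x)) o).image_subset

/-- If `f : X → Y` is continuous, onto, with finite fibres, the Cantor–Bendixson rank of `Y` is
at least that of `X`: whenever the `o`-th derivative of `X` is nonempty, so is that of `Y`. -/
theorem stmt_7 {X Y : Type*} [TopologicalSpace X] [TopologicalSpace Y]
    [T2Space X] [T2Space Y] (f : X → Y) (hcont : Continuous f)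
    (hsurj : Function.Surjective f) (hfin : ∀ y : Y, (f ⁻¹' {y}).Finite) :
    ∀ o : Ordinal, (cbDeriv X o).Nonempty → (cbDeriv Y o).Nonempty :=
  stmt_7_general f hcont hfin
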